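/- arXiv:0910.3088 — 9 statements merged into one kernel-verified Lean document; each statement's English description precedes it below -/
import Mathlib

section
/- Let Z be a mean-zero real random variable whose moment generating function satisfies E[e^{θZ}] ≤ exp(-(b/a)θ - (2b/a²)·log(1 - aθ/2)) for all θ ∈ (0, 2/a), where a > 0 and b > 0. Then for all t > 0, P(Z ≥ t) ≤ e^{-2t/a}(1 + at/b)^{2b/a²}. -/
open MeasureTheory Real Set

/-- Chernoff step: a mean-zero random variable whose moment generating function is
bounded by `exp(-(b/a)θ - (2b/a²) log(1 - aθ/2))` on `(0, 2/a)` satisfies the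
concentration bound `P(Z ≥ t) ≤ e^{-2t/a} (1 + at/b)^{2b/a²}`. -/
theorem stmt2 {Ω : Type*} [MeasurableSpace Ω] (μ : Measure Ω) [IsProbabilityMeasure μ]
    (Z : Ω → ℝ) (a b : ℝ) (ha : 0 < a) (hb : 0 < b)
    (hmean : ∫ ω, Z ω ∂μ = 0)
    (hint : ∀ θ ∈ Set.Ioo (0 : ℝ) (2 / a), Integrable (fun ω => Real.exp (θ * Z ω)) μ)
    (hmgf : ∀ θ ∈ Set.Ioo (0 : ℝ) (2 / a),
      ∫ ω, Real.exp (θ * Z ω) ∂μ ≤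
        Real.exp (-(b / a) * θ - (2 * b / a ^ 2) * Real.log (1 - a * θ / 2)))
    (t : ℝ) (ht : 0 < t) :
    (μ {ω | t ≤ Z ω}).toReal ≤
      Real.exp (-2 * t / a) * (1 + a * t / b) ^ (2 * b / a ^ 2) := by
  have hatb : 0 < a * t + b := by positivity
  set θ : ℝ := 2 * t / (a * t + b) with hθdef
  have hθ0 : 0 < θ := by positivity
  have hθlt : θ < 2 / a := by
    rw [div_lt_div_iff₀ hatb ha]
    nlinarith
  have hmem : θ ∈ Set.Ioo (0 : ℝ) (2 / a) := ⟨hθ0, hθlt⟩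
  have h1 : (μ {ω | t ≤ Z ω}).toReal ≤
      Real.exp (-θ * t) * ProbabilityTheory.mgf Z μ θ :=
    ProbabilityTheory.measure_ge_le_exp_mul_mgf t hθ0.le (hint θ hmem)
  have h2 : ProbabilityTheory.mgf Z μ θ ≤
      Real.exp (-(b / a) * θ - (2 * b / a ^ 2) * Real.log (1 - a * θ / 2)) := hmgf θ hmem
  have key : 1 - a * θ / 2 = b / (a * t + b) := by
    rw [hθdef]; field_simp; ring
  have h1b : 1 + a * t / b = (a * t + b) / b := by field_simp; ring
  have hlog : Real.log (1 - a * θ / 2) = - Real.log (1 + a * t / b) := by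
    rw [key, h1b, Real.log_div hb.ne' hatb.ne', Real.log_div hatb.ne' hb.ne']
    ring
  have hpos : (0 : ℝ) < 1 + a * t / b := by positivity
  have hrw : Real.exp (-θ * t) *
      Real.exp (-(b / a) * θ - (2 * b / a ^ 2) * Real.log (1 - a * θ / 2)) =
      Real.exp (-2 * t / a) * (1 + a * t / b) ^ (2 * b / a ^ 2) := by
    rw [Real.rpow_def_of_pos hpos, ← Real.exp_add, ← Real.exp_add, hlog]
    congr 1
    rw [hθdef]
    field_simp
    ring
  calc (μ {ω | t ≤ Z ω}).toReal ≤ Real.exp (-θ * t) * ProbabilityTheory.mgf Z μ θ := h1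
    _ ≤ Real.exp (-θ * t) *
        Real.exp (-(b / a) * θ - (2 * b / a ^ 2) * Real.log (1 - a * θ / 2)) := by
        exact mul_le_mul_of_nonneg_left h2 (Real.exp_pos _).le
    _ = _ := hrw
end

section
/- For a > 0, b > 0 and t > 0, the minimum over θ ∈ (0, 2/a) of the function θ ↦ -(t + b/a)θ - (2b/a²)·log(1 - aθ/2) is attained at θ̃ = 2t/(at + b), and the minimal value equals -2t/a + (2b/a²)·log(1 + at/b). -/
open Set Real

/-- The minimum over `θ ∈ (0, 2/a)` of `θ ↦ -(t + b/a)θ - (2b/a²) log(1 - aθ/2)`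
is attained at `θ̃ = 2t/(at + b)` and equals `-2t/a + (2b/a²) log(1 + at/b)`. -/
theorem stmt3 (a b t : ℝ) (ha : 0 < a) (hb : 0 < b) (ht : 0 < t) :
    (2 * t / (a * t + b) ∈ Set.Ioo (0 : ℝ) (2 / a)) ∧
    (∀ θ ∈ Set.Ioo (0 : ℝ) (2 / a),
      -(t + b / a) * (2 * t / (a * t + b)) -
          (2 * b / a ^ 2) * Real.log (1 - a * (2 * t / (a * t + b)) / 2) ≤
        -(t + b / a) * θ - (2 * b / a ^ 2) * Real.log (1 - a * θ / 2)) ∧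
    (-(t + b / a) * (2 * t / (a * t + b)) -
        (2 * b / a ^ 2) * Real.log (1 - a * (2 * t / (a * t + b)) / 2)
      = -2 * t / a + (2 * b / a ^ 2) * Real.log (1 + a * t / b)) := by
  have hs : 0 < a * t + b := by positivity
  have hkey : 1 - a * (2 * t / (a * t + b)) / 2 = b / (a * t + b) := by
    field_simp
    ring
  have hbs : (0:ℝ) < b / (a * t + b) := by positivity
  refine ⟨⟨by positivity, ?_⟩, ?_, ?_⟩
  · rw [div_lt_div_iff₀ hs ha]
    nlinarith
  · rintro θ ⟨hθ0, hθ2⟩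
    have h1 : 0 < 1 - a * θ / 2 := by
      rw [lt_div_iff₀ ha] at hθ2
      linarith
    rw [hkey]
    have hx : 0 < (1 - a * θ / 2) / (b / (a * t + b)) := by positivity
    have hlog := Real.log_le_sub_one_of_pos hx
    rw [Real.log_div h1.ne' hbs.ne'] at hlog
    have hdiv : (1 - a * θ / 2) / (b / (a * t + b)) = (1 - a * θ / 2) * (a * t + b) / b := by
      field_simp
    rw [hdiv] at hlog
    have hc : 0 < 2 * b / a ^ 2 := by positivity
    have h2 : (2 * b / a ^ 2) * (Real.log (1 - a * θ / 2) - Real.log (b / (a * t + b)))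
        ≤ (2 * b / a ^ 2) * ((1 - a * θ / 2) * (a * t + b) / b - 1) :=
      mul_le_mul_of_nonneg_left hlog hc.le
    have he : (2 * b / a ^ 2) * ((1 - a * θ / 2) * (a * t + b) / b - 1)
        = -(t + b / a) * θ + (t + b / a) * (2 * t / (a * t + b)) := by
      field_simp
      ring
    rw [he] at h2
    linarith
  · rw [hkey, Real.log_div hb.ne' hs.ne']
    have : Real.log (1 + a * t / b) = Real.log (a * t + b) - Real.log b := by
      rw [← Real.log_div hs.ne' hb.ne']
      congr 1
      field_simp
      ring
    rw [this]
    field_simp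
    ring
end

section
/- For a > 0, b > 0, the function φ_l(t) := e^{2t/a}(1 - at/b)^{2b/a²} is a strictly decreasing bijection from (0, b/a) onto (0, 1). -/
open Set Real

/-!
Substituting `s = a t / b` and `c = 2 b / a²` gives `φ_l(t) = (e^s (1 - s))^c`. The map
`s ↦ e^s (1 - s)` has derivative `-s e^s`, so it decreases strictly from `1` to `0` on `[0, 1]`;
raising to the positive power `c` preserves this, and the intermediate value theorem gives
surjectivity onto `(0, 1)`.
-/

theorem StrictAntiOn.bijOn_Ioo {α δ : Type*} [ConditionallyCompleteLinearOrder α]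
    [DenselyOrdered α] [TopologicalSpace α] [OrderTopology α] [LinearOrder δ]
    [TopologicalSpace δ] [OrderClosedTopology δ] {f : α → δ} {p q : α} (hpq : p ≤ q)
    (hf : StrictAntiOn f (Icc p q)) (hcont : ContinuousOn f (Icc p q)) :
    BijOn f (Ioo p q) (Ioo (f q) (f p)) :=
  ⟨hf.mapsTo_Ioo, (hf.mono Ioo_subset_Icc_self).injOn, intermediate_value_Ioo' hpq hcont⟩

theorem strictAntiOn_exp_mul_one_sub : StrictAntiOn (fun s : ℝ => exp s * (1 - s)) (Ici 0) := by
  refine strictAntiOn_of_deriv_neg (convex_Ici 0) (by fun_prop) fun s hs => ?_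
  rw [interior_Ici] at hs
  have hderiv : HasDerivAt (fun s : ℝ => exp s * (1 - s)) (-(s * exp s)) s :=
    ((hasDerivAt_exp s).mul ((hasDerivAt_id' s).const_sub 1)).congr_deriv (by ring)
  rw [hderiv.deriv]
  exact neg_neg_of_pos (mul_pos hs (exp_pos s))

theorem exp_mul_mul_one_sub_rpow {s : ℝ} (hs : s ≤ 1) (c : ℝ) :
    exp (c * s) * (1 - s) ^ c = (exp s * (1 - s)) ^ c := by
  rw [mul_rpow (exp_pos s).le (sub_nonneg.2 hs), ← exp_mul, mul_comm s]

theorem strictAntiOn_exp_mul_one_sub_rpow {c : ℝ} (hc : 0 < c) :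
    StrictAntiOn (fun s : ℝ => (exp s * (1 - s)) ^ c) (Icc 0 1) := by
  intro x hx y hy hxy
  have hy_nonneg : 0 ≤ exp y * (1 - y) := mul_nonneg (exp_pos y).le (sub_nonneg.2 hy.2)
  exact rpow_lt_rpow hy_nonneg (strictAntiOn_exp_mul_one_sub hx.1 hy.1 hxy) hc

/-- The function `φ_l(t; a, b)` of the left-tail bound. -/
noncomputable def leftTailBound (a b t : ℝ) : ℝ :=
  exp (2 * t / a) * (1 - a * t / b) ^ (2 * b / a ^ 2)

theorem leftTailBound_zero (a b : ℝ) : leftTailBound a b 0 = 1 := by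
  simp [leftTailBound]

section leftTailBound

variable {a b : ℝ}

theorem leftTailBound_eq (ha : 0 < a) (hb : 0 < b) {t : ℝ} (ht : t ≤ b / a) :
    leftTailBound a b t = (exp (a * t / b) * (1 - a * t / b)) ^ (2 * b / a ^ 2) := by
  have hs : a * t / b ≤ 1 := by
    rw [div_le_one hb, ← le_div_iff₀' ha]
    exact ht
  rw [← exp_mul_mul_one_sub_rpow hs, leftTailBound]
  congr 2
  field_simp

theorem continuous_leftTailBound (hb : 0 ≤ b) : Continuous (leftTailBound a b) := by
  have hc : 0 ≤ 2 * b / a ^ 2 := by positivity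
  exact (continuous_exp.comp (by fun_prop)).mul
    ((by fun_prop : Continuous fun t => 1 - a * t / b).rpow_const fun _ => Or.inr hc)

theorem strictAntiOn_leftTailBound (ha : 0 < a) (hb : 0 < b) :
    StrictAntiOn (leftTailBound a b) (Icc 0 (b / a)) := by
  have hscale : MapsTo (fun t => a * t / b) (Icc 0 (b / a)) (Icc 0 1) := fun t ht =>
    ⟨by have := ht.1; positivity, by
      rw [div_le_one hb, ← le_div_iff₀' ha]; exact ht.2⟩
  intro x hx y hy hxy
  rw [leftTailBound_eq ha hb hx.2, leftTailBound_eq ha hb hy.2]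
  exact strictAntiOn_exp_mul_one_sub_rpow (by positivity) (hscale hx) (hscale hy)
    (div_lt_div_of_pos_right (mul_lt_mul_of_pos_left hxy ha) hb)

theorem leftTailBound_div (ha : 0 < a) (hb : 0 < b) : leftTailBound a b (b / a) = 0 := by
  rw [leftTailBound_eq ha hb le_rfl, mul_div_cancel₀ _ ha.ne', div_self hb.ne', sub_self,
    mul_zero, zero_rpow (by positivity)]

end leftTailBound

/-- `φ_l(t) = e^{2t/a} (1 - at/b)^{2b/a²}` is a strictly decreasing bijection
from `(0, b/a)` onto `(0, 1)`. -/
theorem stmt5 (a b : ℝ) (ha : 0 < a) (hb : 0 < b) :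
    StrictAntiOn
        (fun t : ℝ => Real.exp (2 * t / a) * (1 - a * t / b) ^ (2 * b / a ^ 2))
        (Set.Ioo 0 (b / a)) ∧
      Set.BijOn
        (fun t : ℝ => Real.exp (2 * t / a) * (1 - a * t / b) ^ (2 * b / a ^ 2))
        (Set.Ioo 0 (b / a)) (Set.Ioo 0 1) := by
  have hanti := strictAntiOn_leftTailBound ha hb
  refine ⟨hanti.mono Ioo_subset_Icc_self, ?_⟩
  have hbij := hanti.bijOn_Ioo (by positivity) (continuous_leftTailBound hb.le).continuousOn
  rwa [leftTailBound_zero a b, leftTailBound_div ha hb] at hbij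
end

section
/- The concentration bound of the paper improves that of Nourdin–Viens: for all a > 0, b > 0 and t > 0, one has e^{-2t/a}(1 + at/b)^{2b/a²} ≤ exp(-t²/(at + b)). -/
open Real

/-- The bound of the paper improves the Nourdin–Viens bound:
`e^{-2t/a} (1 + at/b)^{2b/a²} ≤ exp(-t²/(at + b))`. -/
theorem stmt6 (a b t : ℝ) (ha : 0 < a) (hb : 0 < b) (ht : 0 < t) :
    Real.exp (-2 * t / a) * (1 + a * t / b) ^ (2 * b / a ^ 2) ≤
      Real.exp (-(t ^ 2) / (a * t + b)) := by
  have hx : 0 < a * t / b := by positivity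
  set y : ℝ := 1 + a * t / b with hy
  have hy1 : 1 < y := by rw [hy]; linarith
  have hy0 : 0 < y := by linarith
  have hlog : Real.log y ≤ (y - y⁻¹) / 2 := by
    have hlp : 0 < Real.log y := Real.log_pos hy1
    have h := Real.self_lt_sinh_iff.mpr hlp
    rw [Real.sinh_eq, Real.exp_log hy0, Real.exp_neg, Real.exp_log hy0] at h
    linarith
  have hpow : y ^ (2 * b / a ^ 2) = Real.exp ((2 * b / a ^ 2) * Real.log y) := by
    rw [Real.rpow_def_of_pos hy0, mul_comm]
  rw [hpow, ← Real.exp_add, Real.exp_le_exp]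
  have hinv : y⁻¹ = b / (a * t + b) := by
    rw [hy]
    rw [eq_div_iff (by positivity), inv_mul_eq_div, div_eq_iff (by positivity)]
    field_simp
    ring
  have key : (2 * b / a ^ 2) * ((y - y⁻¹) / 2) = 2 * t / a - t ^ 2 / (a * t + b) := by
    rw [hinv, hy]
    field_simp
    ring
  have hc : (0:ℝ) ≤ 2 * b / a ^ 2 := by positivity
  have := mul_le_mul_of_nonneg_left hlog hc
  rw [key] at this
  ring_nf at this ⊢; linarith
end

section
/- For all a > 0, b > 0 and t ∈ (0, b/a), one has e^{2t/a}(1 - at/b)^{2b/a²} ≤ exp(-t²/b). -/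
/-!
Taking logarithms, the claim is `log (1 - x) ≤ -x - x² / 2` at `x = a t / b`, multiplied by
`2 b / a²`. That inequality holds because `-log (1 - x) = ∑ xⁿ⁺¹ / (n + 1)` has nonnegative
terms for `0 ≤ x < 1`, so it dominates its first two terms.
-/

open Real

theorem Real.log_one_sub_le_neg_sub_sq_div_two {x : ℝ} (hx₀ : 0 ≤ x) (hx₁ : x < 1) :
    log (1 - x) ≤ -x - x ^ 2 / 2 := by
  have hsum := hasSum_pow_div_log_of_abs_lt_one (abs_lt.2 ⟨by linarith, hx₁⟩)
  have hpartial := sum_le_hasSum (Finset.range 2) (fun n _ => by positivity) hsum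
  norm_num [Finset.sum_range_succ] at hpartial
  linarith

/-- Left-tail comparison: `e^{2t/a} (1 - at/b)^{2b/a²} ≤ exp(-t²/b)` for
`t ∈ (0, b/a)`. -/
theorem stmt7 (a b t : ℝ) (ha : 0 < a) (hb : 0 < b)
    (ht : t ∈ Set.Ioo (0 : ℝ) (b / a)) :
    Real.exp (2 * t / a) * (1 - a * t / b) ^ (2 * b / a ^ 2) ≤
      Real.exp (-(t ^ 2) / b) := by
  obtain ⟨ht₀, htba⟩ := ht
  set x := a * t / b with hx
  have hx₁ : x < 1 := by
    rw [hx, div_lt_one hb, ← lt_div_iff₀' ha]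
    exact htba
  rw [rpow_def_of_pos (by linarith), ← exp_add, exp_le_exp]
  calc 2 * t / a + log (1 - x) * (2 * b / a ^ 2)
      ≤ 2 * t / a + (-x - x ^ 2 / 2) * (2 * b / a ^ 2) := by
        gcongr
        exact log_one_sub_le_neg_sub_sq_div_two (by positivity) hx₁
    _ = -(t ^ 2) / b := by
        rw [hx]
        field_simp
        ring
end

section
/- Let a be a filter of order p and length ℓ+1 with α_j = ∑_{q-r=j} a_q a_r. For every integer N ≥ ℓ, one has -2 ∑_{j=ℓ}^N π_H^a(j) = x_N - ∑_{k=-ℓ+1}^ℓ α_k S_{ℓ+k-1}^H, where S_k^H = ∑_{j=0}^k j^{2H}, π_H^a(j) = -(1/2)∑_{k=-ℓ}^ℓ α_k |j+k|^{2H}, and x_N = ∑_{j=N-ℓ+1}^{N+ℓ} |j|^{2H} ∑_{k=j-N}^ℓ α_k. -/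
open Finset

private lemma sum_Ioc_split (f : ℤ → ℝ) {a b c : ℤ} (hab : a ≤ b) (hbc : b ≤ c) :
    ∑ j ∈ Finset.Ioc a c, f j = ∑ j ∈ Finset.Ioc a b, f j + ∑ j ∈ Finset.Ioc b c, f j := by
  rw [← Finset.sum_union]
  · rw [Finset.Ioc_union_Ioc_eq_Ioc hab hbc]
  · rw [Finset.disjoint_left]
    intro x hx hx'
    simp only [Finset.mem_Ioc] at hx hx'
    omega

/-- Telescoping identity for partial sums of covariances of a filtered fBm:
for `N ≥ ℓ`, `-2 ∑_{j=ℓ}^N π_H^a(j) = x_N - ∑_{k=-ℓ+1}^ℓ α_k S_{ℓ+k-1}^H`. -/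
theorem stmt13 (ℓ p : ℕ) (a : ℕ → ℝ) (hp : 1 ≤ p)
    (hfilter : ∀ j < p, ∑ q ∈ Finset.range (ℓ + 1), (q : ℝ) ^ j * a q = 0)
    (α : ℤ → ℝ)
    (hα : ∀ j : ℤ, α j = ∑ q ∈ Finset.range (ℓ + 1), ∑ r ∈ Finset.range (ℓ + 1),
      (if (q : ℤ) - (r : ℤ) = j then a q * a r else 0))
    (H : ℝ) (hH : H ∈ Set.Ioo (0 : ℝ) 1)
    (π : ℤ → ℝ)
    (hπ : ∀ j : ℤ, π j =
      -(1 / 2) * ∑ k ∈ Finset.Icc (-(ℓ : ℤ)) (ℓ : ℤ), α k * |(j : ℝ) + (k : ℝ)| ^ (2 * H))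
    (S : ℕ → ℝ)
    (hS : ∀ k : ℕ, S k = ∑ j ∈ Finset.range (k + 1), (j : ℝ) ^ (2 * H))
    (N : ℕ) (hN : ℓ ≤ N) :
    -2 * ∑ j ∈ Finset.Icc (ℓ : ℤ) (N : ℤ), π j =
      (∑ j ∈ Finset.Icc ((N : ℤ) - ℓ + 1) ((N : ℤ) + ℓ),
          |(j : ℝ)| ^ (2 * H) * ∑ k ∈ Finset.Icc (j - (N : ℤ)) (ℓ : ℤ), α k)
        - ∑ k ∈ Finset.Icc (-(ℓ : ℤ) + 1) (ℓ : ℤ), α k * S (((ℓ : ℤ) + k - 1).toNat) := by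
  obtain ⟨hH0, hH1⟩ := hH
  have h2H : (2 * H) ≠ 0 := by positivity
  -- sum of the filter coefficients vanishes
  have ha0 : ∑ q ∈ Finset.range (ℓ + 1), a q = 0 := by
    simpa using hfilter 0 hp
  -- sum of α over Icc (-ℓ) ℓ vanishes
  have hα0 : ∑ k ∈ Finset.Icc (-(ℓ : ℤ)) (ℓ : ℤ), α k = 0 := by
    have key : ∑ k ∈ Finset.Icc (-(ℓ : ℤ)) (ℓ : ℤ), α k
        = ∑ q ∈ Finset.range (ℓ + 1), ∑ r ∈ Finset.range (ℓ + 1), a q * a r := by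
      simp_rw [hα]
      rw [Finset.sum_comm]
      refine Finset.sum_congr rfl fun q hq => ?_
      rw [Finset.sum_comm]
      refine Finset.sum_congr rfl fun r hr => ?_
      rw [Finset.sum_ite_eq (Finset.Icc (-(ℓ : ℤ)) (ℓ : ℤ)) ((q : ℤ) - r)
        (fun _ => a q * a r)]
      rw [if_pos]
      simp only [Finset.mem_range] at hq hr
      simp only [Finset.mem_Icc]
      omega
    rw [key, ← Finset.sum_mul_sum, ha0, zero_mul]
  -- partial power sums via integer intervals
  have hFnat : ∀ n : ℕ, ∑ j ∈ Finset.Ioc (-1 : ℤ) (n : ℤ), (j : ℝ) ^ (2 * H) = S n := by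
    intro n
    induction n with
    | zero =>
      have h0 : Finset.Ioc (-1 : ℤ) ((0 : ℕ) : ℤ) = {0} := by
        ext x; simp only [Finset.mem_Ioc, Finset.mem_singleton]; omega
      rw [h0, hS]
      simp
    | succ n ih =>
      have hstep : Finset.Ioc (-1 : ℤ) ((n + 1 : ℕ) : ℤ)
          = insert ((n + 1 : ℕ) : ℤ) (Finset.Ioc (-1 : ℤ) (n : ℤ)) := by
        ext x; simp only [Finset.mem_Ioc, Finset.mem_insert]; omega
      rw [hstep, Finset.sum_insert (by simp only [Finset.mem_Ioc]; omega), ih,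
        hS (n + 1), Finset.sum_range_succ, ← hS n]
      push_cast
      ring
  have hF : ∀ m : ℤ, -1 ≤ m →
      ∑ j ∈ Finset.Ioc (-1 : ℤ) m, (j : ℝ) ^ (2 * H) = S m.toNat := by
    intro m hm
    rcases le_or_gt 0 m with h | h
    · obtain ⟨n, rfl⟩ := Int.eq_ofNat_of_zero_le h
      simpa using hFnat n
    · have hm1 : m = -1 := by omega
      subst hm1
      rw [Finset.Ioc_self, Finset.sum_empty]
      have ht : ((-1 : ℤ)).toNat = 0 := rfl
      rw [ht, hS]
      simp [Real.zero_rpow h2H]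
  -- step 1: unfold π and remove the absolute value
  have step1 : -2 * ∑ j ∈ Finset.Icc (ℓ : ℤ) (N : ℤ), π j
      = ∑ k ∈ Finset.Icc (-(ℓ : ℤ)) (ℓ : ℤ), α k *
          ∑ j ∈ Finset.Icc (ℓ : ℤ) (N : ℤ), ((j + k : ℤ) : ℝ) ^ (2 * H) := by
    have : -2 * ∑ j ∈ Finset.Icc (ℓ : ℤ) (N : ℤ), π j
        = ∑ j ∈ Finset.Icc (ℓ : ℤ) (N : ℤ), ∑ k ∈ Finset.Icc (-(ℓ : ℤ)) (ℓ : ℤ),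
            α k * |(j : ℝ) + (k : ℝ)| ^ (2 * H) := by
      rw [Finset.mul_sum]
      refine Finset.sum_congr rfl fun j hj => ?_
      rw [hπ]
      ring
    rw [this, Finset.sum_comm]
    refine Finset.sum_congr rfl fun k hk => ?_
    rw [Finset.mul_sum]
    refine Finset.sum_congr rfl fun j hj => ?_
    simp only [Finset.mem_Icc] at hk hj
    have hnn : (0 : ℝ) ≤ (j : ℝ) + (k : ℝ) := by
      have : (0 : ℤ) ≤ j + k := by omega
      exact_mod_cast this
    rw [abs_of_nonneg hnn]
    push_cast
    ring_nf
  rw [step1]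
  -- step 2: telescoping for each k
  have htel : ∀ k ∈ Finset.Icc (-(ℓ : ℤ)) (ℓ : ℤ),
      ∑ j ∈ Finset.Icc (ℓ : ℤ) (N : ℤ), ((j + k : ℤ) : ℝ) ^ (2 * H)
        = S ((N : ℤ) + k).toNat - S ((ℓ : ℤ) + k - 1).toNat := by
    intro k hk
    simp only [Finset.mem_Icc] at hk
    have e1 : ∑ j ∈ Finset.Icc (ℓ : ℤ) (N : ℤ), ((j + k : ℤ) : ℝ) ^ (2 * H)
        = ∑ j ∈ Finset.Icc ((ℓ : ℤ) + k) ((N : ℤ) + k), (j : ℝ) ^ (2 * H) := by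
      rw [← Finset.map_add_right_Icc, Finset.sum_map]
      rfl
    have e2 : Finset.Icc ((ℓ : ℤ) + k) ((N : ℤ) + k)
        = Finset.Ioc ((ℓ : ℤ) + k - 1) ((N : ℤ) + k) := by
      ext x; simp only [Finset.mem_Icc, Finset.mem_Ioc]; omega
    have hsplit := sum_Ioc_split (fun j : ℤ => (j : ℝ) ^ (2 * H))
      (a := -1) (b := (ℓ : ℤ) + k - 1) (c := (N : ℤ) + k) (by omega) (by omega)
    rw [e1, e2, ← hF _ (by omega : (-1 : ℤ) ≤ (N : ℤ) + k),
      ← hF _ (by omega : (-1 : ℤ) ≤ (ℓ : ℤ) + k - 1), hsplit]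
    ring
  rw [Finset.sum_congr rfl fun k hk => by rw [htel k hk]]
  simp_rw [mul_sub]
  rw [Finset.sum_sub_distrib]
  -- Part B : the subtracted sum
  have hB : ∑ k ∈ Finset.Icc (-(ℓ : ℤ)) (ℓ : ℤ), α k * S (((ℓ : ℤ) + k - 1).toNat)
      = ∑ k ∈ Finset.Icc (-(ℓ : ℤ) + 1) (ℓ : ℤ), α k * S (((ℓ : ℤ) + k - 1).toNat) := by
    have hsplit : Finset.Icc (-(ℓ : ℤ)) (ℓ : ℤ)
        = insert (-(ℓ : ℤ)) (Finset.Icc (-(ℓ : ℤ) + 1) (ℓ : ℤ)) := by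
      ext x; simp only [Finset.mem_Icc, Finset.mem_insert]; omega
    rw [hsplit, Finset.sum_insert (by simp only [Finset.mem_Icc]; omega)]
    have ht : (((ℓ : ℤ) + -(ℓ : ℤ) - 1).toNat) = 0 := by omega
    have hz : S 0 = 0 := by rw [hS]; simp [Real.zero_rpow h2H]
    rw [ht, hz, mul_zero, zero_add]
  rw [hB]
  -- Part A : the main sum
  have hA : ∑ k ∈ Finset.Icc (-(ℓ : ℤ)) (ℓ : ℤ), α k * S (((N : ℤ) + k).toNat)
      = ∑ j ∈ Finset.Icc ((N : ℤ) - ℓ + 1) ((N : ℤ) + ℓ),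
          |(j : ℝ)| ^ (2 * H) * ∑ k ∈ Finset.Icc (j - (N : ℤ)) (ℓ : ℤ), α k := by
    -- subtract the constant S (N - ℓ)
    have stepA1 : ∑ k ∈ Finset.Icc (-(ℓ : ℤ)) (ℓ : ℤ), α k * S (((N : ℤ) + k).toNat)
        = ∑ k ∈ Finset.Icc (-(ℓ : ℤ)) (ℓ : ℤ),
            α k * (S (((N : ℤ) + k).toNat) - S (((N : ℤ) - ℓ).toNat)) := by
      simp_rw [mul_sub]
      rw [Finset.sum_sub_distrib, ← Finset.sum_mul, hα0, zero_mul, sub_zero]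
    rw [stepA1]
    -- express the difference as an interval sum
    have stepA2 : ∀ k ∈ Finset.Icc (-(ℓ : ℤ)) (ℓ : ℤ),
        S (((N : ℤ) + k).toNat) - S (((N : ℤ) - ℓ).toNat)
          = ∑ j ∈ Finset.Icc ((N : ℤ) - ℓ + 1) ((N : ℤ) + k), (j : ℝ) ^ (2 * H) := by
      intro k hk
      simp only [Finset.mem_Icc] at hk
      have hsplit := sum_Ioc_split (fun j : ℤ => (j : ℝ) ^ (2 * H))
        (a := -1) (b := (N : ℤ) - ℓ) (c := (N : ℤ) + k) (by omega) (by omega)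
      have e2 : Finset.Ioc ((N : ℤ) - ℓ) ((N : ℤ) + k)
          = Finset.Icc ((N : ℤ) - ℓ + 1) ((N : ℤ) + k) := by
        ext x; simp only [Finset.mem_Icc, Finset.mem_Ioc]; omega
      rw [← hF _ (by omega : (-1 : ℤ) ≤ (N : ℤ) + k),
        ← hF _ (by omega : (-1 : ℤ) ≤ (N : ℤ) - ℓ), hsplit, e2]
      ring
    rw [Finset.sum_congr rfl fun k hk => by rw [stepA2 k hk]]
    -- extend inner sum with an indicator and swap the order of summation
    have stepA3 : ∀ k ∈ Finset.Icc (-(ℓ : ℤ)) (ℓ : ℤ),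
        α k * ∑ j ∈ Finset.Icc ((N : ℤ) - ℓ + 1) ((N : ℤ) + k), (j : ℝ) ^ (2 * H)
          = ∑ j ∈ Finset.Icc ((N : ℤ) - ℓ + 1) ((N : ℤ) + ℓ),
              (if j ≤ (N : ℤ) + k then α k * (j : ℝ) ^ (2 * H) else 0) := by
      intro k hk
      simp only [Finset.mem_Icc] at hk
      have efil : Finset.Icc ((N : ℤ) - ℓ + 1) ((N : ℤ) + k)
          = (Finset.Icc ((N : ℤ) - ℓ + 1) ((N : ℤ) + ℓ)).filter
              (fun j => j ≤ (N : ℤ) + k) := by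
        ext x
        simp only [Finset.mem_Icc, Finset.mem_filter]
        omega
      rw [efil, Finset.sum_filter, Finset.mul_sum]
      refine Finset.sum_congr rfl fun j hj => ?_
      split <;> simp
    rw [Finset.sum_congr rfl fun k hk => stepA3 k hk, Finset.sum_comm]
    refine Finset.sum_congr rfl fun j hj => ?_
    simp only [Finset.mem_Icc] at hj
    have efil2 : Finset.Icc (j - (N : ℤ)) (ℓ : ℤ)
        = (Finset.Icc (-(ℓ : ℤ)) (ℓ : ℤ)).filter (fun k => j ≤ (N : ℤ) + k) := by
      ext x
      simp only [Finset.mem_Icc, Finset.mem_filter]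
      omega
    rw [efil2, Finset.sum_filter] at *
    have habs : |(j : ℝ)| = (j : ℝ) := by
      rw [abs_of_nonneg]
      have : (0 : ℤ) ≤ j := by omega
      exact_mod_cast this
    rw [habs, Finset.mul_sum]
    refine Finset.sum_congr rfl fun k hk => ?_
    split <;> ring
  rw [hA]
end

section
/- Let a be a filter of order p ≥ 2 with coefficients α_j = ∑_{q-r=j} a_q a_r, and set x_N = ∑_{j=N-ℓ+1}^{N+ℓ} |j|^{2H} ∑_{k=j-N}^ℓ α_k for N ≥ ℓ. Then x_N → 0 as N → ∞, for every H ∈ (0, 1); indeed x_N = O(N^{2H-2}). -/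
/-!
With `β i = ∑_{k=i}^{ℓ} α_k` one has `x_N = ∑_{i=1-ℓ}^{ℓ} |N + i|^{2H} β_i`. Since `α` is the
autocorrelation of a filter of order `p`, its moments `∑_k k^m α_k` vanish for `m < 2p`, in
particular for `m ≤ 2` because `p ≥ 2`; summing by parts this gives `∑ β_i = ∑ i β_i = 0`.
Hence `x_N = ∑ β_i ((N + i)^{2H} - N^{2H} - 2H N^{2H-1} i)`, and each bracket is
`O(N^{2H-2})` by the second-order Taylor bound for `t ↦ t^{2H}` on `[N/2, ∞)`.
-/

open Finset Filter Asymptotics Polynomial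

section Moments

variable {ι R : Type*} [CommRing R] {s : Finset ι} {a x : ι → R} {p : ℕ}

theorem sum_sum_sub_pow_mul_eq_zero (ha : ∀ j < p, ∑ q ∈ s, x q ^ j * a q = 0) {m : ℕ}
    (hm : m < 2 * p) : ∑ q ∈ s, ∑ r ∈ s, (x q - x r) ^ m * (a q * a r) = 0 := by
  have hsplit : ∑ q ∈ s, ∑ r ∈ s, (x q - x r) ^ m * (a q * a r) =
      ∑ j ∈ range (m + 1), (-1) ^ (j + m) * (m.choose j : R) *
        ((∑ q ∈ s, x q ^ (m - j) * a q) * ∑ r ∈ s, x r ^ j * a r) := by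
    simp only [sub_pow, Finset.sum_mul, Finset.mul_sum]
    conv_rhs => rw [Finset.sum_comm]
    refine sum_congr rfl fun r _ => ?_
    rw [Finset.sum_comm]
    refine sum_congr rfl fun j _ => sum_congr rfl fun q _ => ?_
    ring
  rw [hsplit]
  refine sum_eq_zero fun j _ => ?_
  rcases lt_or_ge j p with hjp | hjp
  · rw [ha j hjp, mul_zero, mul_zero]
  · rw [ha (m - j) (by omega), zero_mul, mul_zero]

theorem sum_sum_eval_sub_mul_eq_zero (ha : ∀ j < p, ∑ q ∈ s, x q ^ j * a q = 0) {P : R[X]}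
    (hP : P.natDegree < 2 * p) : ∑ q ∈ s, ∑ r ∈ s, P.eval (x q - x r) * (a q * a r) = 0 :=
  calc _ = ∑ q ∈ s, ∑ m ∈ range (2 * p), ∑ r ∈ s,
        P.coeff m * ((x q - x r) ^ m * (a q * a r)) := by
        refine sum_congr rfl fun q _ => ?_
        simp only [eval_eq_sum_range' hP, Finset.sum_mul, mul_assoc]
        exact Finset.sum_comm
    _ = ∑ m ∈ range (2 * p), P.coeff m * ∑ q ∈ s, ∑ r ∈ s, (x q - x r) ^ m * (a q * a r) := by
        rw [Finset.sum_comm]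
        simp only [Finset.mul_sum]
    _ = 0 := sum_eq_zero fun m hm => by
        rw [sum_sum_sub_pow_mul_eq_zero ha (mem_range.mp hm), mul_zero]

end Moments

theorem sum_Icc_eq_sub_of_sub_eq {G : Type*} [AddCommGroup G] {F w : ℤ → G}
    (hF : ∀ i, F i - F (i - 1) = w i) {lo hi : ℤ} (h : lo ≤ hi + 1) :
    ∑ i ∈ Icc lo hi, w i = F hi - F (lo - 1) := by
  induction hi, (show lo - 1 ≤ hi by omega) using Int.leInduction with
  | base => simp
  | succ n hn ih =>
    rw [← insert_Icc_right_eq_Icc_add_one (by omega), sum_insert (by simp), ih (by omega),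
      ← hF, add_sub_cancel_right]
    abel

theorem sum_mul_sum_Icc_of_eq_sum_ite {ι R : Type*} [CommSemiring R] {s : Finset ι}
    {d : ι → ι → ℤ} {c : ι → ι → R} {α : ℤ → R}
    (hα : ∀ k, α k = ∑ q ∈ s, ∑ r ∈ s, if d q r = k then c q r else 0) {lo hi : ℤ}
    (hd : ∀ q ∈ s, ∀ r ∈ s, d q r ≤ hi) (w : ℤ → R) :
    ∑ i ∈ Icc lo hi, w i * ∑ k ∈ Icc i hi, α k =
      ∑ q ∈ s, ∑ r ∈ s, (∑ i ∈ Icc lo (d q r), w i) * c q r := by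
  have htail : ∀ i, ∑ k ∈ Icc i hi, α k = ∑ q ∈ s, ∑ r ∈ s, if i ≤ d q r then c q r else 0 := by
    intro i
    simp only [hα]
    rw [Finset.sum_comm]
    refine sum_congr rfl fun q hq => ?_
    rw [Finset.sum_comm]
    refine sum_congr rfl fun r hr => ?_
    simp [hd q hq r hr]
  simp only [htail, Finset.mul_sum, mul_ite, mul_zero]
  rw [Finset.sum_comm]
  refine sum_congr rfl fun q hq => ?_
  rw [Finset.sum_comm]
  refine sum_congr rfl fun r hr => ?_
  rw [← sum_filter, Finset.sum_mul]
  congr 1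
  ext i
  simp only [mem_filter, mem_Icc]
  have := hd q hq r hr
  omega

theorem sum_Icc_affine_mul_sum_Icc_eq_zero {ℓ p : ℕ} {a : ℕ → ℝ} (hp : 2 ≤ p)
    (hfilter : ∀ j < p, ∑ q ∈ range (ℓ + 1), (q : ℝ) ^ j * a q = 0) {α : ℤ → ℝ}
    (hα : ∀ j : ℤ, α j = ∑ q ∈ range (ℓ + 1), ∑ r ∈ range (ℓ + 1),
      if (q : ℤ) - (r : ℤ) = j then a q * a r else 0) (c₀ c₁ : ℝ) :
    ∑ i ∈ Icc (1 - ℓ : ℤ) ℓ, (c₀ + c₁ * i) * ∑ k ∈ Icc i (ℓ : ℤ), α k = 0 := by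
  set P : ℝ[X] := C c₀ * (X + C (ℓ : ℝ)) + C (c₁ / 2) * ((X + C (ℓ : ℝ)) * (X + C (1 - ℓ : ℝ)))
  have hP : ∀ k : ℤ, -ℓ ≤ k → ∑ i ∈ Icc (1 - ℓ : ℤ) k, (c₀ + c₁ * i) = P.eval (k : ℝ) := by
    intro k hk
    rw [sum_Icc_eq_sub_of_sub_eq (F := fun k : ℤ => P.eval (k : ℝ)) (fun i => ?_) (by omega)]
    · simp [P]
    · simp only [P, eval_add, eval_mul, eval_C, eval_X]
      push_cast
      ring
  have hdeg : P.natDegree < 2 * p := by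
    have : P.natDegree ≤ 2 := by simp only [P]; compute_degree
    omega
  have hmem : ∀ q ∈ range (ℓ + 1), (q : ℤ) ≤ ℓ := fun q hq => by
    have := mem_range.mp hq
    omega
  rw [sum_mul_sum_Icc_of_eq_sum_ite (d := fun q r : ℕ => (q : ℤ) - r)
    (c := fun q r => a q * a r) hα (fun q hq r _ => by have := hmem q hq; omega)]
  calc _ = ∑ q ∈ range (ℓ + 1), ∑ r ∈ range (ℓ + 1), P.eval ((q : ℝ) - r) * (a q * a r) :=
        sum_congr rfl fun q _ => sum_congr rfl fun r hr => by
          rw [hP _ (by have := hmem r hr; omega)]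
          push_cast
          rfl
    _ = 0 := sum_sum_eval_sub_mul_eq_zero hfilter hdeg

theorem abs_sub_sub_mul_sub_le_of_hasDerivAt {f f' : ℝ → ℝ} {S : Set ℝ} (hS : S.OrdConnected)
    (hf : ∀ t ∈ S, HasDerivAt f (f' t) t) {K c y : ℝ} (hK : 0 ≤ K) (hc : c ∈ S) (hy : y ∈ S)
    (hf' : ∀ t ∈ S, |f' t - f' c| ≤ K * |t - c|) :
    |f y - f c - f' c * (y - c)| ≤ K * (y - c) ^ 2 := by
  have hsub := hS.uIcc_subset hc hy
  have hderiv : ∀ t ∈ Set.uIcc c y,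
      HasDerivWithinAt (fun t => f t - f' c * t) (f' t - f' c) (Set.uIcc c y) t := fun t ht =>
    ((hf t (hsub ht)).sub ((hasDerivAt_id t).const_mul (f' c) |>.congr_deriv (mul_one _)))
      |>.hasDerivWithinAt
  have hbound : ∀ t ∈ Set.uIcc c y, ‖f' t - f' c‖ ≤ K * |y - c| := fun t ht =>
    (hf' t (hsub ht)).trans (mul_le_mul_of_nonneg_left (Set.abs_sub_left_of_mem_uIcc ht) hK)
  have := (convex_uIcc c y).norm_image_sub_le_of_norm_hasDerivWithin_le hderiv hbound
    Set.left_mem_uIcc Set.right_mem_uIcc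
  calc |f y - f c - f' c * (y - c)| = ‖f y - f' c * y - (f c - f' c * c)‖ := by
        rw [Real.norm_eq_abs]; ring_nf
    _ ≤ K * |y - c| * |y - c| := this
    _ = K * (y - c) ^ 2 := by rw [mul_assoc, ← abs_mul, ← sq, abs_sq]

theorem abs_rpow_sub_rpow_le {r m c t : ℝ} (hr : r ≤ 1) (hm : 0 < m) (hc : m ≤ c) (ht : m ≤ t) :
    |t ^ r - c ^ r| ≤ |r| * m ^ (r - 1) * |t - c| := by
  have hderiv : ∀ u ∈ Set.Ici m, HasDerivWithinAt (· ^ r) (r * u ^ (r - 1)) (Set.Ici m) u :=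
    fun u hu => (Real.hasDerivAt_rpow_const (Or.inl (hm.trans_le hu).ne')).hasDerivWithinAt
  have hbound : ∀ u ∈ Set.Ici m, ‖r * u ^ (r - 1)‖ ≤ |r| * m ^ (r - 1) := fun u hu => by
    rw [Real.norm_eq_abs, abs_mul, abs_of_nonneg (Real.rpow_nonneg (hm.le.trans hu) _)]
    exact mul_le_mul_of_nonneg_left (Real.rpow_le_rpow_of_nonpos hm hu (by linarith))
      (abs_nonneg r)
  simpa only [Real.norm_eq_abs] using
    (convex_Ici m).norm_image_sub_le_of_norm_hasDerivWithin_le hderiv hbound hc ht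

theorem abs_rpow_sub_rpow_sub_mul_le {s m c y : ℝ} (hs : s ≤ 2) (hm : 0 < m) (hc : m ≤ c)
    (hy : m ≤ y) :
    |y ^ s - c ^ s - s * c ^ (s - 1) * (y - c)| ≤ |s * (s - 1)| * m ^ (s - 2) * (y - c) ^ 2 := by
  refine abs_sub_sub_mul_sub_le_of_hasDerivAt Set.ordConnected_Ici
    (fun t ht => Real.hasDerivAt_rpow_const (Or.inl (hm.trans_le ht).ne'))
    (by positivity) hc hy fun t ht => ?_
  rw [← mul_sub, abs_mul, abs_mul, mul_assoc, mul_assoc, ← mul_assoc |s - 1|,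
    show s - 2 = s - 1 - 1 by ring]
  exact mul_le_mul_of_nonneg_left (abs_rpow_sub_rpow_le (by linarith) hm hc ht) (abs_nonneg s)

theorem isBigO_abs_add_rpow_sub {s : ℝ} (hs : s ≤ 2) (c : ℝ) :
    (fun t : ℝ => |t + c| ^ s - t ^ s - s * t ^ (s - 1) * c) =O[atTop] fun t => t ^ (s - 2) := by
  refine IsBigO.of_bound (|s * (s - 1)| * c ^ 2 / 2 ^ (s - 2)) ?_
  filter_upwards [eventually_ge_atTop (2 * |c| + 1)] with t ht
  have ht0 : 0 < t := by linarith [abs_nonneg c]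
  have hc : t / 2 ≤ t + c := by linarith [neg_abs_le c]
  have := abs_rpow_sub_rpow_sub_mul_le hs (half_pos ht0) (half_le_self ht0.le) hc
  rw [add_sub_cancel_left, Real.div_rpow ht0.le zero_le_two] at this
  rw [Real.norm_eq_abs, Real.norm_eq_abs, abs_of_pos (by linarith : 0 < t + c),
    abs_of_nonneg (Real.rpow_nonneg ht0.le _)]
  exact this.trans_eq (by ring)

theorem isBigO_sum_abs_add_rpow_mul {s : ℝ} (hs : s ≤ 2) {I : Finset ℤ} {β : ℤ → ℝ}
    (hβ : ∀ c₀ c₁ : ℝ, ∑ i ∈ I, (c₀ + c₁ * i) * β i = 0) :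
    (fun N : ℕ => ∑ i ∈ I, |(N : ℝ) + i| ^ s * β i) =O[atTop] fun N : ℕ => (N : ℝ) ^ (s - 2) := by
  have hrem : (fun N : ℕ => ∑ i ∈ I, |(N : ℝ) + i| ^ s * β i) =
      ∑ i ∈ I, fun N : ℕ =>
        β i * (|(N : ℝ) + i| ^ s - (N : ℝ) ^ s - s * (N : ℝ) ^ (s - 1) * i) := by
    funext N
    rw [Finset.sum_apply, ← sub_zero (∑ i ∈ I, _), ← hβ ((N : ℝ) ^ s) (s * (N : ℝ) ^ (s - 1)),
      ← sum_sub_distrib]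
    exact sum_congr rfl fun i _ => by ring
  rw [hrem]
  exact IsBigO.sum fun i _ => ((isBigO_abs_add_rpow_sub hs i).comp_tendsto
    tendsto_natCast_atTop_atTop).const_mul_left (β i)

/-- For a filter of order `p ≥ 2`, the boundary terms
`x_N = ∑_{j=N-ℓ+1}^{N+ℓ} |j|^{2H} ∑_{k=j-N}^{ℓ} α_k` tend to `0` as `N → ∞`;
indeed `x_N = O(N^{2H-2})`. -/
theorem stmt14 (ℓ p : ℕ) (a : ℕ → ℝ) (hp : 2 ≤ p)
    (hfilter : ∀ j < p, ∑ q ∈ Finset.range (ℓ + 1), (q : ℝ) ^ j * a q = 0)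
    (α : ℤ → ℝ)
    (hα : ∀ j : ℤ, α j = ∑ q ∈ Finset.range (ℓ + 1), ∑ r ∈ Finset.range (ℓ + 1),
      (if (q : ℤ) - (r : ℤ) = j then a q * a r else 0))
    (H : ℝ) (hH : H ∈ Set.Ioo (0 : ℝ) 1)
    (x : ℕ → ℝ)
    (hx : ∀ N : ℕ, x N = ∑ j ∈ Finset.Icc ((N : ℤ) - ℓ + 1) ((N : ℤ) + ℓ),
      |(j : ℝ)| ^ (2 * H) * ∑ k ∈ Finset.Icc (j - (N : ℤ)) (ℓ : ℤ), α k) :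
    Filter.Tendsto x Filter.atTop (nhds 0) ∧
    (fun N : ℕ => x N) =O[Filter.atTop] (fun N : ℕ => (N : ℝ) ^ (2 * H - 2)) := by
  have hxβ : x = fun N : ℕ => ∑ i ∈ Icc (1 - ℓ : ℤ) ℓ,
      |(N : ℝ) + i| ^ (2 * H) * ∑ k ∈ Icc i (ℓ : ℤ), α k := by
    funext N
    rw [hx N, show Icc ((N : ℤ) - ℓ + 1) (N + ℓ) =
        (Icc (1 - ℓ : ℤ) ℓ).map (addLeftEmbedding (N : ℤ)) by rw [map_add_left_Icc]; ring_nf,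
      sum_map]
    refine sum_congr rfl fun i _ => ?_
    simp only [addLeftEmbedding_apply, Int.cast_add, Int.cast_natCast, add_sub_cancel_left]
  have hO : x =O[atTop] fun N : ℕ => (N : ℝ) ^ (2 * H - 2) := by
    rw [hxβ]
    exact isBigO_sum_abs_add_rpow_mul (by linarith [hH.2])
      (sum_Icc_affine_mul_sum_Icc_eq_zero hp hfilter hα)
  have hlim : Tendsto (fun N : ℕ => (N : ℝ) ^ (2 * H - 2)) atTop (nhds 0) := by
    have := (tendsto_rpow_neg_atTop (by linarith [hH.2] : 0 < 2 - 2 * H)).comp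
      tendsto_natCast_atTop_atTop
    rwa [neg_sub] at this
  exact ⟨hO.trans_tendsto hlim, hO⟩
end

section
/- For the second-order increment filter a = (1,-2,1) and H ∈ (0, 1/2], the ℓ¹-norm of the correlation function satisfies ∑_{j∈ℤ}|ρ_H^a(j)| = 1 + (10 - 7·4^H + 2·9^H)/(4 - 4^H), and this function of H is maximized (over H ∈ [0,1]) at H → 0⁺ with supremum value 8/3. Consequently κ^{i2} := 2·sup_{H∈(0,1)} ∑_{j∈ℤ}|ρ_H^a(j)| = 16/3. -/
/-!
Write `α = 2H` and `Δ` for the forward difference with step `1`. Iterating the mean value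
theorem gives `Δⁿ[x ^ α](x) = α (α - 1) ⋯ (α - n + 1) · c ^ (α - n)` for some `c ≥ x`. For
`n ≥ 0` we have `π_H(n + 2) = -½ Δ⁴[x ^ α](n)`, so the tail `(π_H(n + 2))_{n ≥ 0}` has constant
sign and telescopes; as `Δ³[x ^ α](n) → 0`, its ℓ¹-norm is `½ |Δ³[x ^ α](0)| = ½ |9^H - 3·4^H + 3|`.
With `π_H(0) = 4 - 4^H`, `π_H(1) = -½ (7 - 4·4^H + 9^H) ≤ 0` and evenness, the ℓ¹-norm of `ρ_H`
is `(11 - 5·4^H + 9^H + |9^H - 3·4^H + 3|) / (4 - 4^H)`. The sign of `Δ³[x ^ α](0)` is that of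
`α (α - 1) (α - 2)`: this gives the stated formula for `H ≤ 1/2` and the value `2` for
`H ≥ 1/2`. The formula is at most `8/3` by two concavity bounds on `(1 ± 1/2) ^ (2H)`, and it
tends to `8/3` as `H → 0⁺`.
-/

open Real Filter Set Topology fwdDiff

section IterateFwdDiff

variable {f f' : ℝ → ℝ} {a h : ℝ}

theorem continuousOn_iterate_fwdDiff (hh : 0 ≤ h) (hf : ContinuousOn f (Ici a)) (n : ℕ) :
    ContinuousOn (Δ_[h] ^[n] f) (Ici a) := by
  induction n with
  | zero => exact hf
  | succ n ih =>
    rw [Function.iterate_succ_apply']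
    refine (ih.comp (continuousOn_id.add continuousOn_const) fun y (hy : a ≤ y) ↦ ?_).sub ih
    show a ≤ y + h
    linarith

theorem hasDerivAt_iterate_fwdDiff (hh : 0 ≤ h) (hf : ∀ y, a < y → HasDerivAt f (f' y) y)
    (n : ℕ) {y : ℝ} (hy : a < y) : HasDerivAt (Δ_[h] ^[n] f) (Δ_[h] ^[n] f' y) y := by
  induction n generalizing y with
  | zero => exact hf y hy
  | succ n ih =>
    simp only [Function.iterate_succ_apply']
    exact ((ih (by linarith)).comp_add_const y h).sub (ih hy)

end IterateFwdDiff

theorem exists_iterate_fwdDiff_rpow_eq (n : ℕ) :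
    ∀ {α x : ℝ}, 0 ≤ x → (x ≠ 0 ∨ 0 ≤ α) → ∃ c, x ≤ c ∧
      Δ_[1] ^[n] (fun y : ℝ ↦ y ^ α) x = (∏ i ∈ Finset.range n, (α - i)) * c ^ (α - n) := by
  induction n with
  | zero => intro α x _ _; exact ⟨x, le_rfl, by simp⟩
  | succ n ih =>
    intro α x hx hxα
    have hcont : ContinuousOn (fun y : ℝ ↦ y ^ α) (Ici x) := fun y (hy : x ≤ y) ↦
      (continuousAt_rpow_const y α (hxα.imp_left fun hx0 ↦
        ((lt_of_le_of_ne hx (Ne.symm hx0)).trans_le hy).ne')).continuousWithinAt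
    have hderiv : ∀ y, x < y →
        HasDerivAt (fun y : ℝ ↦ y ^ α) ((α • fun y : ℝ ↦ y ^ (α - 1)) y) y :=
      fun y hy ↦ hasDerivAt_rpow_const (Or.inl (by linarith))
    obtain ⟨c, hc, hslope⟩ := exists_hasDerivAt_eq_slope (Δ_[1] ^[n] fun y : ℝ ↦ y ^ α) _
      (lt_add_one x) ((continuousOn_iterate_fwdDiff zero_le_one hcont n).mono Icc_subset_Ici_self)
      (fun y hy ↦ hasDerivAt_iterate_fwdDiff zero_le_one hderiv n hy.1)
    rw [add_sub_cancel_left, div_one, fwdDiff_iter_const_smul, Pi.smul_apply] at hslope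
    obtain ⟨d, hcd, hd⟩ := ih (α := α - 1) (x := c) (by linarith [hc.1]) (.inl (by linarith [hc.1]))
    refine ⟨d, by linarith [hc.1], ?_⟩
    rw [Function.iterate_succ_apply', fwdDiff, ← hslope, hd, Finset.prod_range_succ', smul_eq_mul]
    push_cast
    simp only [sub_sub, add_comm (1 : ℝ), sub_zero]
    ring

theorem iterate_fwdDiff_rpow_nonneg {n : ℕ} {α x : ℝ} (hx : 0 ≤ x) (hxα : x ≠ 0 ∨ 0 ≤ α)
    (hP : 0 ≤ ∏ i ∈ Finset.range n, (α - i)) : 0 ≤ Δ_[1] ^[n] (fun y : ℝ ↦ y ^ α) x := by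
  obtain ⟨c, hxc, h⟩ := exists_iterate_fwdDiff_rpow_eq n hx hxα
  exact h ▸ mul_nonneg hP (rpow_nonneg (hx.trans hxc) _)

theorem iterate_fwdDiff_rpow_nonpos {n : ℕ} {α x : ℝ} (hx : 0 ≤ x) (hxα : x ≠ 0 ∨ 0 ≤ α)
    (hP : ∏ i ∈ Finset.range n, (α - i) ≤ 0) : Δ_[1] ^[n] (fun y : ℝ ↦ y ^ α) x ≤ 0 := by
  obtain ⟨c, hxc, h⟩ := exists_iterate_fwdDiff_rpow_eq n hx hxα
  exact h ▸ mul_nonpos_of_nonpos_of_nonneg hP (rpow_nonneg (hx.trans hxc) _)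

theorem tendsto_iterate_fwdDiff_rpow_atTop {n : ℕ} {α : ℝ} (hα : α < n) :
    Tendsto (Δ_[1] ^[n] fun y : ℝ ↦ y ^ α) atTop (𝓝 0) := by
  set P := ∏ i ∈ Finset.range n, (α - i)
  have hbound : ∀ᶠ x in atTop, ‖Δ_[1] ^[n] (fun y : ℝ ↦ y ^ α) x‖ ≤ |P| * x ^ (α - n) := by
    filter_upwards [eventually_gt_atTop 0] with x hx
    obtain ⟨c, hxc, h⟩ := exists_iterate_fwdDiff_rpow_eq n hx.le (.inl hx.ne')
    rw [h, norm_mul, norm_eq_abs, norm_eq_abs, abs_of_nonneg (rpow_nonneg (hx.le.trans hxc) _)]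
    exact mul_le_mul_of_nonneg_left (rpow_le_rpow_of_nonpos hx hxc (by linarith)) (abs_nonneg _)
  refine squeeze_zero_norm' hbound ?_
  simpa [neg_sub] using (tendsto_rpow_neg_atTop (sub_pos.2 hα)).const_mul |P|

theorem hasSum_abs_succ_sub_of_tendsto_zero {g : ℕ → ℝ} (hg : Monotone g ∨ Antitone g)
    (hlim : Tendsto g atTop (𝓝 0)) : HasSum (fun n ↦ |g (n + 1) - g n|) |g 0| := by
  have key : ∀ g : ℕ → ℝ, Monotone g → Tendsto g atTop (𝓝 0) →
      HasSum (fun n ↦ |g (n + 1) - g n|) |g 0| := by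
    intro g hg hlim
    have hstep : ∀ n, 0 ≤ g (n + 1) - g n := fun n ↦ sub_nonneg.2 (hg n.le_succ)
    rw [funext fun n ↦ abs_of_nonneg (hstep n), abs_of_nonpos (hg.ge_of_tendsto hlim 0),
      hasSum_iff_tendsto_nat_of_nonneg hstep]
    simp only [Finset.sum_range_sub]
    exact zero_sub (g 0) ▸ hlim.sub_const (g 0)
  rcases hg with hg | hg
  · exact key g hg hlim
  · simpa [abs_sub_comm, neg_add_eq_sub] using key (-g) hg.neg (neg_zero (G := ℝ) ▸ hlim.neg)

theorem rpow_two_mul {b : ℝ} (hb : 0 ≤ b) (H : ℝ) : b ^ (2 * H) = (b ^ 2) ^ H := by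
  rw [rpow_mul hb, rpow_two]

theorem four_rpow_lt_four {H : ℝ} (hH : H < 1) : (4 : ℝ) ^ H < 4 := by
  simpa using rpow_lt_rpow_of_exponent_lt (by norm_num : (1 : ℝ) < 4) hH

theorem four_mul_four_rpow_le {H : ℝ} (hH : H ≤ 1) : 4 * (4 : ℝ) ^ H ≤ 7 + 9 ^ H := by
  have hβ1 : 1 ≤ logb 4 9 := (le_logb_iff_rpow_le (by norm_num) (by norm_num)).2 (by norm_num)
  have hβ : 9 * logb 4 9 ≤ 16 := by
    have := log_le_log (by norm_num) (show (9 : ℝ) ^ 9 ≤ 4 ^ 16 by norm_num)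
    rw [log_pow, log_pow] at this
    rw [logb, mul_div_assoc', div_le_iff₀ (log_pos (by norm_num))]
    push_cast at this
    linarith
  have h9 : (9 : ℝ) ^ H = 9 * ((4 : ℝ) ^ H / 4) ^ logb 4 9 := by
    have h49 : ((4 : ℝ) ^ H) ^ logb 4 9 = 9 ^ H := by
      rw [← rpow_mul (by norm_num), mul_comm, rpow_mul (by norm_num),
        rpow_logb (by norm_num) (by norm_num) (by norm_num)]
    rw [div_rpow (by positivity) (by norm_num),
      rpow_logb (by norm_num) (by norm_num) (by norm_num), h49]
    ring
  have hu1 : (4 : ℝ) ^ H / 4 ≤ 1 := by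
    rw [div_le_one (by norm_num)]
    simpa using rpow_le_rpow_of_exponent_le (by norm_num : (1 : ℝ) ≤ 4) hH
  -- Bernoulli: `u ^ β ≥ 1 + β (u - 1)` for `u = 4^H / 4 ≤ 1`, and `9 β ≤ 16` closes the gap.
  have hbern := one_add_mul_self_le_rpow_one_add (s := (4 : ℝ) ^ H / 4 - 1)
    (by linarith [rpow_pos_of_pos (by norm_num : (0 : ℝ) < 4) H]) hβ1
  rw [add_sub_cancel] at hbern
  rw [h9]
  nlinarith [mul_nonneg (sub_nonneg.2 hu1) (sub_nonneg.2 hβ)]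

theorem six_mul_nine_rpow_add_ten_le {H : ℝ} (h0 : 0 ≤ H) (h : H ≤ 1 / 2) :
    6 * (9 : ℝ) ^ H + 10 ≤ 16 * 4 ^ H := by
  have h3 := rpow_one_add_le_one_add_mul_self (s := 1 / 2) (p := 2 * H) (by norm_num)
    (by linarith) (by linarith)
  have h1 := rpow_one_add_le_one_add_mul_self (s := -1 / 2) (p := 2 * H) (by norm_num)
    (by linarith) (by linarith)
  rw [rpow_two_mul (by norm_num)] at h3 h1
  have h4 : (0 : ℝ) < 4 ^ H := by positivity
  norm_num [div_rpow, div_le_iff₀ h4] at h3 h1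
  nlinarith [mul_le_mul_of_nonneg_right h1 h4.le, inv_mul_cancel₀ h4.ne']

theorem iterate_fwdDiff_three_rpow_two_mul_zero {H : ℝ} (hH : 0 < H) :
    Δ_[1] ^[3] (fun y : ℝ ↦ y ^ (2 * H)) 0 = (9 : ℝ) ^ H - 3 * 4 ^ H + 3 := by
  norm_num [fwdDiff_iter_eq_sum_shift, Finset.sum_range_succ,
    zero_rpow (by positivity : 2 * H ≠ 0), zero_rpow hH.ne', rpow_two_mul]
  ring

/-- The paper's `π_H^a(j)` for `a = (1, -2, 1)`. -/
noncomputable def secondIncrementCov (H : ℝ) (j : ℤ) : ℝ :=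
  -(1 / 2) * (|(j : ℝ) + 2| ^ (2 * H) - 4 * |(j : ℝ) + 1| ^ (2 * H) + 6 * |(j : ℝ)| ^ (2 * H)
    - 4 * |(j : ℝ) - 1| ^ (2 * H) + |(j : ℝ) - 2| ^ (2 * H))

namespace secondIncrementCov

theorem neg (H : ℝ) (j : ℤ) : secondIncrementCov H (-j) = secondIncrementCov H j := by
  have hadd : ∀ c : ℝ, |-(j : ℝ) + c| = |(j : ℝ) - c| := fun c ↦ by rw [← abs_neg]; ring_nf
  have hsub : ∀ c : ℝ, |-(j : ℝ) - c| = |(j : ℝ) + c| := fun c ↦ by rw [← abs_neg]; ring_nf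
  simp only [secondIncrementCov, Int.cast_neg, hadd, hsub, abs_neg]
  ring

theorem zero {H : ℝ} (hH : 0 < H) : secondIncrementCov H 0 = 4 - 4 ^ H := by
  norm_num [secondIncrementCov, zero_rpow (by positivity : 2 * H ≠ 0), rpow_two_mul]
  ring

theorem one {H : ℝ} (hH : 0 < H) :
    secondIncrementCov H 1 = -(1 / 2) * (7 - 4 * (4 : ℝ) ^ H + 9 ^ H) := by
  norm_num [secondIncrementCov, zero_rpow (by positivity : 2 * H ≠ 0), rpow_two_mul]
  ring

theorem natCast_add_two (H : ℝ) (n : ℕ) :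
    secondIncrementCov H (n + 2) = -(1 / 2) * Δ_[1] ^[4] (fun y : ℝ ↦ y ^ (2 * H)) n := by
  have hn : (0 : ℝ) ≤ n := n.cast_nonneg
  simp only [secondIncrementCov, fwdDiff_iter_eq_sum_shift, Finset.sum_range_succ]
  push_cast
  rw [abs_of_nonneg (by linarith), abs_of_nonneg (by linarith), abs_of_nonneg (by linarith),
    abs_of_nonneg (by linarith), abs_of_nonneg (by linarith)]
  norm_num [Nat.choose]
  ring_nf

theorem hasSum_abs_natCast_add_two {H : ℝ} (h0 : 0 < H) (h1 : H < 3 / 2) :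
    HasSum (fun n : ℕ ↦ |secondIncrementCov H (n + 2)|) (|(9 : ℝ) ^ H - 3 * 4 ^ H + 3| / 2) := by
  set g : ℕ → ℝ := fun n ↦ Δ_[1] ^[3] (fun y : ℝ ↦ y ^ (2 * H)) n
  have hstep : ∀ n : ℕ, Δ_[1] ^[4] (fun y : ℝ ↦ y ^ (2 * H)) n = g (n + 1) - g n := by
    intro n
    simp only [g, Function.iterate_succ_apply' _ 3, fwdDiff]
    push_cast
    rfl
  have hα : ∀ n : ℕ, (n : ℝ) ≠ 0 ∨ 0 ≤ 2 * H := fun _ ↦ .inr (by positivity)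
  have hmono : Monotone g ∨ Antitone g := by
    rcases le_total 0 (∏ i ∈ Finset.range 4, (2 * H - i)) with hP | hP
    · exact .inl <| monotone_nat_of_le_succ fun n ↦ sub_nonneg.1 <|
        hstep n ▸ iterate_fwdDiff_rpow_nonneg n.cast_nonneg (hα n) hP
    · exact .inr <| antitone_nat_of_succ_le fun n ↦ sub_nonpos.1 <|
        hstep n ▸ iterate_fwdDiff_rpow_nonpos n.cast_nonneg (hα n) hP
  have hlim : Tendsto g atTop (𝓝 0) :=
    (tendsto_iterate_fwdDiff_rpow_atTop (by push_cast; linarith)).comp tendsto_natCast_atTop_atTop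
  have hg0 : g 0 = (9 : ℝ) ^ H - 3 * 4 ^ H + 3 := by
    simp only [g, Nat.cast_zero, iterate_fwdDiff_three_rpow_two_mul_zero h0]
  have hterm : ∀ n : ℕ, |secondIncrementCov H (n + 2)| = |g (n + 1) - g n| / 2 := by
    intro n
    rw [natCast_add_two, hstep, abs_mul]
    norm_num
    ring
  simpa only [hterm, hg0] using (hasSum_abs_succ_sub_of_tendsto_zero hmono hlim).div_const 2

theorem hasSum_abs {H : ℝ} (h0 : 0 < H) (h1 : H < 3 / 2) :
    HasSum (fun j ↦ |secondIncrementCov H j|) (|secondIncrementCov H 0|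
      + 2 * |secondIncrementCov H 1| + |(9 : ℝ) ^ H - 3 * 4 ^ H + 3|) := by
  have hshift : ∀ n : ℕ, ((n + 1 : ℕ) : ℤ) + 1 = n + 2 := fun n ↦ by push_cast; ring
  have htail := hasSum_abs_natCast_add_two h0 h1
  simp only [← hshift] at htail
  have hpos := HasSum.zero_add (f := fun n : ℕ ↦ |secondIncrementCov H (n + 1)|) htail
  rw [Nat.cast_zero, zero_add] at hpos
  have hneg : HasSum (fun n : ℕ ↦ |secondIncrementCov H (-(n + 1))|)
      (|secondIncrementCov H 1| + |(9 : ℝ) ^ H - 3 * 4 ^ H + 3| / 2) := by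
    simpa only [neg] using hpos
  convert HasSum.of_add_one_of_neg_add_one (f := fun j ↦ |secondIncrementCov H j|) hpos hneg
    using 1
  ring

theorem hasSum_abs_div_zero {H : ℝ} (h0 : 0 < H) (h1 : H < 1) :
    HasSum (fun j ↦ |secondIncrementCov H j / secondIncrementCov H 0|)
      ((11 - 5 * (4 : ℝ) ^ H + 9 ^ H + |(9 : ℝ) ^ H - 3 * 4 ^ H + 3|) / (4 - 4 ^ H)) := by
  have hπ0 : 0 < secondIncrementCov H 0 := by
    rw [zero h0]
    linarith [four_rpow_lt_four h1]
  have hπ1 : |secondIncrementCov H 1| = (7 - 4 * (4 : ℝ) ^ H + 9 ^ H) / 2 := by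
    rw [one h0, abs_mul, abs_of_nonneg (a := 7 - _ + _) (by linarith [four_mul_four_rpow_le h1.le])]
    norm_num
    ring
  have h := (hasSum_abs h0 (by linarith)).div_const (secondIncrementCov H 0)
  rw [hπ1, abs_of_pos hπ0, zero h0, show ∀ x y z : ℝ,
    4 - x + 2 * ((7 - 4 * x + y) / 2) + z = 11 - 5 * x + y + z by intros; ring] at h
  simp_rw [abs_div, abs_of_pos hπ0, zero h0]
  exact h

end secondIncrementCov

noncomputable def corrL1 (H : ℝ) : ℝ :=
  ∑' j : ℤ, |secondIncrementCov H j / secondIncrementCov H 0|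

theorem corrL1_of_le_half {H : ℝ} (h0 : 0 < H) (h : H ≤ 1 / 2) :
    corrL1 H = 1 + (10 - 7 * (4 : ℝ) ^ H + 2 * 9 ^ H) / (4 - 4 ^ H) := by
  have hsign : 0 ≤ (9 : ℝ) ^ H - 3 * 4 ^ H + 3 := by
    rw [← iterate_fwdDiff_three_rpow_two_mul_zero h0]
    refine iterate_fwdDiff_rpow_nonneg le_rfl (.inr (by positivity)) ?_
    simp only [Finset.prod_range_succ, Finset.prod_range_zero]
    push_cast
    nlinarith [mul_nonneg (mul_nonneg h0.le (by linarith : 0 ≤ 1 - 2 * H))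
      (by linarith : 0 ≤ 2 - 2 * H)]
  have hne : 4 - (4 : ℝ) ^ H ≠ 0 := (sub_pos.2 (four_rpow_lt_four (by linarith))).ne'
  rw [corrL1, (secondIncrementCov.hasSum_abs_div_zero h0 (by linarith)).tsum_eq,
    abs_of_nonneg hsign]
  field_simp
  ring

theorem corrL1_of_half_le {H : ℝ} (h : 1 / 2 ≤ H) (h1 : H < 1) : corrL1 H = 2 := by
  have h0 : 0 < H := by linarith
  have hsign : (9 : ℝ) ^ H - 3 * 4 ^ H + 3 ≤ 0 := by
    rw [← iterate_fwdDiff_three_rpow_two_mul_zero h0]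
    refine iterate_fwdDiff_rpow_nonpos le_rfl (.inr (by positivity)) ?_
    simp only [Finset.prod_range_succ, Finset.prod_range_zero]
    push_cast
    nlinarith [mul_nonneg (mul_nonneg h0.le (by linarith : 0 ≤ 2 * H - 1))
      (by linarith : 0 ≤ 2 - 2 * H)]
  have hne : 4 - (4 : ℝ) ^ H ≠ 0 := (sub_pos.2 (four_rpow_lt_four h1)).ne'
  rw [corrL1, (secondIncrementCov.hasSum_abs_div_zero h0 h1).tsum_eq, abs_of_nonpos hsign]
  field_simp
  ring

theorem corrL1_le {H : ℝ} (h0 : 0 < H) (h1 : H < 1) : corrL1 H ≤ 8 / 3 := by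
  rcases le_total H (1 / 2) with h | h
  · have hpos : 0 < 4 - (4 : ℝ) ^ H := sub_pos.2 (four_rpow_lt_four h1)
    have hfrac : (10 - 7 * (4 : ℝ) ^ H + 2 * 9 ^ H) / (4 - 4 ^ H) ≤ 5 / 3 := by
      rw [div_le_iff₀ hpos]
      linarith [six_mul_nine_rpow_add_ten_le h0.le h]
    rw [corrL1_of_le_half h0 h]
    linarith
  · rw [corrL1_of_half_le h h1]
    norm_num

theorem tendsto_corrL1_nhdsGT_zero : Tendsto corrL1 (𝓝[>] 0) (𝓝 (8 / 3)) := by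
  have hG : ContinuousAt
      (fun H : ℝ ↦ 1 + (10 - 7 * (4 : ℝ) ^ H + 2 * 9 ^ H) / (4 - 4 ^ H)) 0 := by
    fun_prop (disch := norm_num)
  have := (hG.continuousWithinAt (s := Ioi 0)).tendsto
  norm_num at this
  refine this.congr' ?_
  filter_upwards [Ioc_mem_nhdsGT (show (0 : ℝ) < 1 / 2 by norm_num)] with H hH
  exact (corrL1_of_le_half hH.1 hH.2).symm

theorem sSup_corrL1 : sSup {x | ∃ H ∈ Ioo (0 : ℝ) 1, x = corrL1 H} = 8 / 3 := by
  refine (isLUB_of_mem_closure ?_ ?_).csSup_eq ⟨_, 1 / 2, ⟨by norm_num, by norm_num⟩, rfl⟩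
  · rintro _ ⟨H, hH, rfl⟩
    exact corrL1_le hH.1 hH.2
  · refine mem_closure_of_tendsto tendsto_corrL1_nhdsGT_zero ?_
    filter_upwards [Ioo_mem_nhdsGT (show (0 : ℝ) < 1 by norm_num)] with H hH using ⟨H, hH, rfl⟩

/-- For the second-order increment filter `a = (1,-2,1)` and `H ∈ (0,1/2]`, the
ℓ¹-norm of the correlation function equals
`1 + (10 - 7·4^H + 2·9^H)/(4 - 4^H)`; its supremum over `H ∈ (0,1)` is `8/3`,
so that `κ^{i2} = 16/3`. -/
theorem stmt15 (a : ℕ → ℝ) (ha0 : a 0 = 1) (ha1 : a 1 = -2) (ha2 : a 2 = 1)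
    (piH : ℝ → ℤ → ℝ)
    (hpi : ∀ H : ℝ, ∀ j : ℤ, piH H j =
      -(1 / 2) * ∑ q ∈ Finset.range 3, ∑ r ∈ Finset.range 3,
        a q * a r * |(q : ℝ) - (r : ℝ) + (j : ℝ)| ^ (2 * H))
    (ρ : ℝ → ℤ → ℝ) (hρ : ∀ H : ℝ, ∀ j : ℤ, ρ H j = piH H j / piH H 0) :
    (∀ H ∈ Set.Ioc (0 : ℝ) (1 / 2),
      (∑' j : ℤ, |ρ H j|) =
        1 + (10 - 7 * (4 : ℝ) ^ H + 2 * (9 : ℝ) ^ H) / (4 - (4 : ℝ) ^ H)) ∧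
    sSup {x : ℝ | ∃ H ∈ Set.Ioo (0 : ℝ) 1, x = ∑' j : ℤ, |ρ H j|} = 8 / 3 ∧
    2 * sSup {x : ℝ | ∃ H ∈ Set.Ioo (0 : ℝ) 1, x = ∑' j : ℤ, |ρ H j|} = 16 / 3 := by
  have hπ : ∀ H j, piH H j = secondIncrementCov H j := fun H j ↦ by
    rw [hpi]
    simp only [Finset.sum_range_succ, Finset.sum_range_zero, ha0, ha1, ha2, secondIncrementCov]
    push_cast
    ring_nf
  have hL : ∀ H, ∑' j : ℤ, |ρ H j| = corrL1 H := fun H ↦ by simp only [hρ, hπ, corrL1]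
  simp only [hL]
  exact ⟨fun H hH ↦ corrL1_of_le_half hH.1 hH.2, sSup_corrL1, by rw [sSup_corrL1]; norm_num⟩
end

section
/- For the m-dilated simple increment filter a = {-1,1}^m (length m+1), and H ∈ (0,1/2), the ℓ¹-norm of its correlation function is 1 + ∑_{j=1}^{m-1} |(j+m)^{2H} - 2j^{2H} + |j-m|^{2H}|/m^{2H} + (S_{2m-1}^H - 2S_{m-1}^H)/m^{2H}, where S_k^H = ∑_{j=0}^k j^{2H}. In particular, as H → (1/2)⁻ this quantity tends to 2m, while at H = 1/2 the ℓ¹-norm equals m; hence H ↦ ‖ρ_H^{(i1)^m}‖_{ℓ¹(ℤ)} is discontinuous at H = 1/2 for m ≥ 2. -/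
/-!
Write `p = 2H` and `D(x) = |x + m|^p - 2|x|^p + |x - m|^p`, so that `ρ_H = D / (2 m^p)`.
`D` is even with `D(0) = 2 m^p`, and for `n = k + m ≥ m` concavity of `x ↦ x^p` gives
`|D(n)| = δ(k) - δ(k + m)` with `δ(k) = (k + m)^p - k^p`. The tail of the ℓ¹-sum therefore
telescopes to `∑_{k<m} δ(k) - m · lim δ = S_{2m-1} - 2 S_{m-1} - m · lim δ`.
For `p < 1` the increments `δ(k)` tend to `0`, which gives the closed form. At `p = 1` they are
constantly `m`, so the ℓ¹-norm is `m` less than the closed form, which is continuous at `p = 1`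
with value `2m`: this lost mass is the jump at `H = 1/2`.
-/

open Finset Real Filter Topology

noncomputable def rpowIncr (p c x : ℝ) : ℝ := (x + c) ^ p - x ^ p

lemma rpowIncr_one (c x : ℝ) : rpowIncr 1 c x = c := by
  simp [rpowIncr]

lemma sum_range_rpowIncr (p : ℝ) (m : ℕ) :
    ∑ k ∈ range m, rpowIncr p m k
      = ∑ j ∈ range (2 * m), (j : ℝ) ^ p - 2 * ∑ j ∈ range m, (j : ℝ) ^ p := by
  rw [two_mul m, sum_range_add]
  simp only [rpowIncr, sum_sub_distrib, Nat.cast_add, add_comm (m : ℝ)]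
  ring

section
variable {p c x : ℝ}

lemma rpowIncr_add_le (hp0 : 0 ≤ p) (hp1 : p ≤ 1) (hx : 0 ≤ x) (hc : 0 ≤ c) :
    rpowIncr p c (x + c) ≤ rpowIncr p c x := by
  have h := (concaveOn_rpow hp0 hp1).2 (Set.mem_Ici.2 hx)
    (Set.mem_Ici.2 (by positivity : 0 ≤ x + c + c))
    (by norm_num : (0 : ℝ) ≤ 1 / 2) (by norm_num : (0 : ℝ) ≤ 1 / 2) (by norm_num)
  rw [smul_eq_mul, smul_eq_mul, smul_eq_mul, smul_eq_mul,
    show 1 / 2 * x + 1 / 2 * (x + c + c) = x + c by ring] at h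
  unfold rpowIncr
  linarith

lemma rpowIncr_le (hp0 : 0 ≤ p) (hp1 : p ≤ 1) (hx : 0 < x) (hc : 0 ≤ c) :
    rpowIncr p c x ≤ p * c * x ^ (p - 1) := by
  have hbern : (1 + c / x) ^ p ≤ 1 + p * (c / x) :=
    rpow_one_add_le_one_add_mul_self (by linarith [div_nonneg hc hx.le]) hp0 hp1
  calc rpowIncr p c x = x ^ p * (1 + c / x) ^ p - x ^ p := by
        rw [rpowIncr, ← mul_rpow hx.le (by positivity), mul_one_add, mul_div_cancel₀ _ hx.ne']
    _ ≤ x ^ p * (1 + p * (c / x)) - x ^ p := by gcongr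
    _ = p * c * x ^ (p - 1) := by rw [rpow_sub_one hx.ne']; ring

lemma tendsto_rpowIncr_atTop (hp0 : 0 ≤ p) (hp1 : p < 1) (hc : 0 ≤ c) :
    Tendsto (rpowIncr p c) atTop (𝓝 0) := by
  have hpow : Tendsto (fun x : ℝ => p * c * x ^ (p - 1)) atTop (𝓝 0) := by
    simpa [neg_sub] using (tendsto_rpow_neg_atTop (by linarith : 0 < 1 - p)).const_mul (p * c)
  refine tendsto_of_tendsto_of_tendsto_of_le_of_le' tendsto_const_nhds hpow ?_ ?_
  · filter_upwards [eventually_ge_atTop 0] with x hx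
    exact sub_nonneg.2 (rpow_le_rpow hx (by linarith) hp0)
  · filter_upwards [eventually_gt_atTop 0] with x hx
    exact rpowIncr_le hp0 hp1.le hx hc

end

lemma hasSum_sub_shift_of_tendsto {f : ℕ → ℝ} {L : ℝ} (m : ℕ) (hf : Tendsto f atTop (𝓝 L))
    (hanti : ∀ k, f (k + m) ≤ f k) :
    HasSum (fun k => f k - f (k + m)) (∑ k ∈ range m, f k - m * L) := by
  have hpartial : ∀ N, ∑ k ∈ range N, (f k - f (k + m))
      = ∑ k ∈ range m, f k - ∑ k ∈ range m, f (N + k) := by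
    intro N
    have h1 := sum_range_add f N m
    have h2 := sum_range_add f m N
    rw [add_comm m N] at h2
    simp only [sum_sub_distrib, add_comm _ m]
    linarith
  have htail : Tendsto (fun N => ∑ k ∈ range m, f (N + k)) atTop (𝓝 (m * L)) := by
    simpa using tendsto_finsetSum (range m) fun k _ => hf.comp (tendsto_add_atTop_nat k)
  refine (hasSum_iff_tendsto_nat_of_nonneg (fun k => sub_nonneg.2 (hanti k)) _).2 ?_
  simpa only [hpartial] using tendsto_const_nhds.sub htail

lemma HasSum.nat_add_one_of_nat_add {G : Type*} [AddCommGroup G] [TopologicalSpace G]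
    [IsTopologicalAddGroup G] {g : ℕ → G} {m : ℕ} (hm : 1 ≤ m) {T : G}
    (h : HasSum (fun k => g (k + m)) T) :
    HasSum (fun n => g (n + 1)) (∑ j ∈ Ico 1 m, g j + T) := by
  obtain ⟨m, rfl⟩ := Nat.exists_eq_add_of_le' hm
  rw [sum_Ico_eq_sum_range, add_tsub_cancel_right, add_comm]
  simp only [add_comm 1]
  refine (hasSum_nat_add_iff (f := fun n => g (n + 1)) m).1 ?_
  simpa only [add_assoc, add_comm 1] using h

noncomputable def secondDiff (p c x : ℝ) : ℝ := |x + c| ^ p - 2 * |x| ^ p + |x - c| ^ p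

section
variable {p c x : ℝ}

lemma secondDiff_neg : secondDiff p c (-x) = secondDiff p c x := by
  rw [secondDiff, secondDiff, abs_neg, ← abs_neg (-x + c), ← abs_neg (-x - c)]
  ring_nf

lemma secondDiff_zero (hp : p ≠ 0) (hc : 0 ≤ c) : secondDiff p c 0 = 2 * c ^ p := by
  simp only [secondDiff, zero_add, abs_of_nonneg hc, abs_zero, zero_rpow hp, mul_zero, sub_zero,
    zero_sub, abs_neg]
  ring

lemma secondDiff_of_nonneg (hx : 0 ≤ x) (hc : 0 ≤ c) :
    secondDiff p c x = (x + c) ^ p - 2 * x ^ p + |x - c| ^ p := by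
  rw [secondDiff, abs_of_nonneg hx, abs_of_nonneg (add_nonneg hx hc)]

lemma abs_secondDiff_add (hp0 : 0 ≤ p) (hp1 : p ≤ 1) (hx : 0 ≤ x) (hc : 0 ≤ c) :
    |secondDiff p c (x + c)| = rpowIncr p c x - rpowIncr p c (x + c) := by
  have hanti := rpowIncr_add_le hp0 hp1 hx hc
  rw [secondDiff_of_nonneg (by positivity) hc, add_sub_cancel_right, abs_of_nonneg hx,
    abs_of_nonpos]
  · simp only [rpowIncr]; ring
  · simp only [rpowIncr] at hanti ⊢; linarith

end

section
variable {p L : ℝ} {m : ℕ}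

lemma hasSum_abs_secondDiff_add (hp0 : 0 ≤ p) (hp1 : p ≤ 1)
    (hL : Tendsto (fun k : ℕ => rpowIncr p m k) atTop (𝓝 L)) :
    HasSum (fun k : ℕ => |secondDiff p m ((k + m : ℕ) : ℝ)|)
      (∑ k ∈ range m, rpowIncr p m k - m * L) := by
  have hanti (k : ℕ) : rpowIncr p m ((k + m : ℕ) : ℝ) ≤ rpowIncr p m k := by
    push_cast; exact rpowIncr_add_le hp0 hp1 k.cast_nonneg m.cast_nonneg
  convert hasSum_sub_shift_of_tendsto m hL hanti using 2 with k
  push_cast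
  exact abs_secondDiff_add hp0 hp1 k.cast_nonneg m.cast_nonneg

theorem hasSum_abs_secondDiff (hp0 : 0 < p) (hp1 : p ≤ 1) (hm : 1 ≤ m)
    (hL : Tendsto (fun k : ℕ => rpowIncr p m k) atTop (𝓝 L)) :
    HasSum (fun j : ℤ => |secondDiff p m j|)
      (2 * (m : ℝ) ^ p + 2 * ∑ j ∈ Ico 1 m, |secondDiff p m j|
        + 2 * (∑ k ∈ range m, rpowIncr p m k - m * L)) := by
  set f : ℤ → ℝ := fun j => |secondDiff p m j|
  set s := ∑ j ∈ Ico 1 m, |secondDiff p m j| + (∑ k ∈ range m, rpowIncr p m k - m * L)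
  have hpos : HasSum (fun n : ℕ => f (n + 1)) s := by
    have := (hasSum_abs_secondDiff_add (m := m) hp0.le hp1 hL).nat_add_one_of_nat_add
      (g := fun n : ℕ => f n) hm
    simpa [f] using this
  have hneg : HasSum (fun n : ℕ => f (-(n + 1))) s := by
    simpa only [f, Int.cast_neg, secondDiff_neg] using hpos
  convert hpos.of_add_one_of_neg_add_one hneg using 1
  simp only [s, f, Int.cast_zero, secondDiff_zero hp0.ne' m.cast_nonneg,
    abs_of_nonneg (by positivity : (0 : ℝ) ≤ 2 * (m : ℝ) ^ p)]
  ring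

/- The paper's `ρ_H` for the filter `{-1,1}^m` is `incrCorr (2 * H) m`; `incrCorrL1 m (2 * H)` is
the closed form of its ℓ¹-norm for `H < 1/2`. -/
noncomputable def incrCorr (p : ℝ) (m : ℕ) (j : ℤ) : ℝ := 1 / 2 * secondDiff p m j / (m : ℝ) ^ p

noncomputable def incrCorrL1 (m : ℕ) (p : ℝ) : ℝ :=
  1 + (∑ j ∈ Icc 1 (m - 1), |((j : ℝ) + m) ^ p - 2 * (j : ℝ) ^ p + |(j : ℝ) - m| ^ p|) / (m : ℝ) ^ p
    + (∑ j ∈ range (2 * m), (j : ℝ) ^ p - 2 * ∑ j ∈ range m, (j : ℝ) ^ p) / (m : ℝ) ^ p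

theorem hasSum_abs_incrCorr (hp0 : 0 < p) (hp1 : p ≤ 1) (hm : 1 ≤ m)
    (hL : Tendsto (fun k : ℕ => rpowIncr p m k) atTop (𝓝 L)) :
    HasSum (fun j => |incrCorr p m j|) (incrCorrL1 m p - m * L / (m : ℝ) ^ p) := by
  have hmp : 0 < (m : ℝ) ^ p := by positivity
  have habs (j : ℤ) : |incrCorr p m j| = |secondDiff p m j| / (2 * (m : ℝ) ^ p) := by
    rw [incrCorr, abs_div, abs_mul, abs_of_pos hmp, abs_of_pos one_half_pos]
    ring
  have hmid : ∑ j ∈ Ico 1 m, |secondDiff p m j|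
      = ∑ j ∈ Icc 1 (m - 1), |((j : ℝ) + m) ^ p - 2 * (j : ℝ) ^ p + |(j : ℝ) - m| ^ p| := by
    rw [Icc_sub_one_right_eq_Ico_of_not_isMin (by simpa using Nat.one_le_iff_ne_zero.1 hm)]
    exact sum_congr rfl fun j _ => by rw [secondDiff_of_nonneg j.cast_nonneg m.cast_nonneg]
  have hval : (2 * (m : ℝ) ^ p + 2 * ∑ j ∈ Ico 1 m, |secondDiff p m j|
      + 2 * (∑ k ∈ range m, rpowIncr p m k - m * L)) / (2 * (m : ℝ) ^ p)
      = incrCorrL1 m p - m * L / (m : ℝ) ^ p := by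
    rw [incrCorrL1, hmid, sum_range_rpowIncr]
    field_simp
    ring
  have hsum := (hasSum_abs_secondDiff hp0 hp1 hm hL).div_const (2 * (m : ℝ) ^ p)
  rw [hval] at hsum
  simpa only [habs] using hsum

lemma continuousAt_incrCorrL1 (hm : m ≠ 0) (hp : p ≠ 0) :
    ContinuousAt (incrCorrL1 m) p := by
  have hpow (x : ℝ) : ContinuousAt (fun q : ℝ => x ^ q) p := continuousAt_const_rpow' hp
  have hsum (s : Finset ℕ) (f : ℕ → ℝ → ℝ) (hf : ∀ j ∈ s, ContinuousAt (f j) p) :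
      ContinuousAt (fun q => ∑ j ∈ s, f j q) p := tendsto_finsetSum s hf
  have hden : (m : ℝ) ^ p ≠ 0 := by positivity
  unfold incrCorrL1
  refine (continuousAt_const.add ((hsum _ _ fun j _ => ?_).div (hpow _) hden)).add
    (((hsum _ _ fun j _ => hpow _).sub ((hsum _ _ fun j _ => hpow _).const_mul 2)).div
      (hpow _) hden)
  exact (((hpow _).sub ((hpow _).const_mul 2)).add (hpow _)).abs

lemma incrCorrL1_one (hm : 1 ≤ m) : incrCorrL1 m 1 = 2 * m := by
  have hterm (j : ℕ) (hj : j ∈ Ico 1 m) :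
      |(j : ℝ) + m - 2 * j + abs ((j : ℝ) - m)| = 2 * ((m : ℝ) - j) := by
    have hjm : (j : ℝ) ≤ m := by exact_mod_cast (mem_Ico.1 hj).2.le
    rw [abs_of_nonpos (sub_nonpos.2 hjm), abs_of_nonneg (by linarith)]
    ring
  have hgauss : (∑ j ∈ Ico 1 m, (j : ℝ)) * 2 = m * (m - 1) := by
    rw [sum_Ico_eq_sub _ hm, sum_range_one, Nat.cast_zero, sub_zero, ← Nat.cast_pred hm,
      ← Nat.cast_mul, ← sum_range_id_mul_two]
    push_cast
    ring
  rw [incrCorrL1, ← sum_range_rpowIncr,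
    Icc_sub_one_right_eq_Ico_of_not_isMin (by simpa using Nat.one_le_iff_ne_zero.1 hm)]
  simp only [rpow_one, rpowIncr_one, sum_const, card_range, nsmul_eq_mul]
  rw [sum_congr rfl hterm, ← mul_sum, sum_sub_distrib, sum_const, Nat.card_Ico, nsmul_eq_mul,
    Nat.cast_sub hm]
  field_simp
  linear_combination -hgauss

lemma tsum_abs_incrCorr_of_lt_one (hp0 : 0 < p) (hp1 : p < 1) (hm : 1 ≤ m) :
    ∑' j, |incrCorr p m j| = incrCorrL1 m p := by
  have hL := (tendsto_rpowIncr_atTop hp0.le hp1 m.cast_nonneg).comp tendsto_natCast_atTop_atTop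
  rw [(hasSum_abs_incrCorr hp0 hp1.le hm hL).tsum_eq, mul_zero, zero_div, sub_zero]

lemma tsum_abs_incrCorr_one (hm : 1 ≤ m) : ∑' j, |incrCorr 1 m j| = m := by
  have hL : Tendsto (fun k : ℕ => rpowIncr 1 m k) atTop (𝓝 m) := by simp [rpowIncr_one]
  rw [(hasSum_abs_incrCorr one_pos le_rfl hm hL).tsum_eq, incrCorrL1_one hm, rpow_one]
  field_simp
  ring

lemma tendsto_tsum_abs_incrCorr_nhdsLT_one (hm : 1 ≤ m) :
    Tendsto (fun p => ∑' j, |incrCorr p m j|) (𝓝[<] 1) (𝓝 (2 * m)) := by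
  have hcont := (continuousAt_incrCorrL1 (by omega : m ≠ 0) one_ne_zero).tendsto
  rw [incrCorrL1_one hm] at hcont
  refine (hcont.mono_left nhdsWithin_le_nhds).congr' ?_
  filter_upwards [Ioo_mem_nhdsLT one_pos] with p hp
  exact (tsum_abs_incrCorr_of_lt_one hp.1 hp.2 hm).symm

end

/-- ℓ¹-norm of the correlation of the `m`-dilated simple increment filter
`{-1,1}^m`: explicit formula for `H ∈ (0,1/2)`, limit `2m` as `H → (1/2)⁻`,
value `m` at `H = 1/2`, hence discontinuity at `H = 1/2` for `m ≥ 2`. -/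
theorem stmt16 (m : ℕ) (hm : 2 ≤ m)
    (ρ : ℝ → ℤ → ℝ)
    (hρ : ∀ H : ℝ, ∀ j : ℤ, ρ H j =
      (1 / 2) * (|(j : ℝ) + (m : ℝ)| ^ (2 * H) - 2 * |(j : ℝ)| ^ (2 * H)
          + |(j : ℝ) - (m : ℝ)| ^ (2 * H)) / (m : ℝ) ^ (2 * H))
    (S : ℝ → ℕ → ℝ)
    (hS : ∀ H : ℝ, ∀ k : ℕ, S H k = ∑ j ∈ Finset.range (k + 1), (j : ℝ) ^ (2 * H)) :
    (∀ H ∈ Set.Ioo (0 : ℝ) (1 / 2),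
      (∑' j : ℤ, |ρ H j|) =
        1 + (∑ j ∈ Finset.Icc 1 (m - 1),
              |((j : ℝ) + (m : ℝ)) ^ (2 * H) - 2 * (j : ℝ) ^ (2 * H)
                + |(j : ℝ) - (m : ℝ)| ^ (2 * H)|) / (m : ℝ) ^ (2 * H)
          + (S H (2 * m - 1) - 2 * S H (m - 1)) / (m : ℝ) ^ (2 * H)) ∧
    Filter.Tendsto (fun H : ℝ => ∑' j : ℤ, |ρ H j|)
      (nhdsWithin (1 / 2) (Set.Iio (1 / 2))) (nhds (2 * (m : ℝ))) ∧
    (∑' j : ℤ, |ρ (1 / 2) j|) = (m : ℝ) ∧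
    ¬ ContinuousAt (fun H : ℝ => ∑' j : ℤ, |ρ H j|) (1 / 2) := by
  have hm1 : 1 ≤ m := by omega
  have hρ' (H : ℝ) : ∑' j, |ρ H j| = ∑' j, |incrCorr (2 * H) m j| :=
    tsum_congr fun j => by rw [hρ]; rfl
  have hS' (H : ℝ) : S H (2 * m - 1) - 2 * S H (m - 1)
      = ∑ j ∈ range (2 * m), (j : ℝ) ^ (2 * H) - 2 * ∑ j ∈ range m, (j : ℝ) ^ (2 * H) := by
    rw [hS, hS, Nat.sub_add_cancel (by omega), Nat.sub_add_cancel hm1]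
  have hdouble : Tendsto (fun H : ℝ => 2 * H) (𝓝[<] (1 / 2)) (𝓝[<] 1) := by
    refine tendsto_nhdsWithin_of_tendsto_nhds_of_eventually_within _ ?_ ?_
    · exact ((continuous_const_mul 2).tendsto' _ _ (by norm_num)).mono_left nhdsWithin_le_nhds
    · filter_upwards [self_mem_nhdsWithin] with H (hH : H < 1 / 2)
      exact (by linarith : 2 * H < 1)
  have hlim : Tendsto (fun H => ∑' j, |ρ H j|) (𝓝[<] (1 / 2)) (𝓝 (2 * m)) := by
    simpa only [hρ', Function.comp_def] using
      (tendsto_tsum_abs_incrCorr_nhdsLT_one hm1).comp hdouble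
  have hhalf : ∑' j, |ρ (1 / 2) j| = m := by
    rw [hρ', show 2 * (1 / 2 : ℝ) = 1 by norm_num, tsum_abs_incrCorr_one hm1]
  refine ⟨fun H hH => ?_, hlim, hhalf, fun hcont => ?_⟩
  · rw [hρ', tsum_abs_incrCorr_of_lt_one (by linarith [hH.1]) (by linarith [hH.2]) hm1, hS']
    rfl
  · have h2m : (2 * m : ℝ) = m :=
      tendsto_nhds_unique hlim (hhalf ▸ hcont.tendsto.mono_left nhdsWithin_le_nhds)
    have : (1 : ℝ) ≤ m := by exact_mod_cast hm1
    linarith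
end
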